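/- arXiv:2603.23077 — 3 statements merged into one kernel-verified Lean document; each statement's English description precedes it below -/
import Mathlib

section
/- Assume Q is strictly increasing with inverse Q⁻¹ and set H(α) := a(α)Q⁻¹(α) for α ∈ (t',t''). Suppose the set M₁ of local maximizers of H in (t',t'') and the set M₂ of local minimizers of H in (t',t'') are both finite, M₁ is nonempty with cardinality j, and m := max({H(α) : α ∈ M₂} ∪ {0}) < M := min{H(α) : α ∈ M₁}. Then for every λ ∈ (m, M) the map P_λ has at least 2j fixed points in D_λ; equivalently, the equation H(α) = λ has at least 2j solutions α ∈ (t',t''). -/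
open Set Filter Topology

/- With Q strictly increasing (inverse R = Q⁻¹) and H(α) = a(α)Q⁻¹(α): if the sets M₁ of
   local maximizers and M₂ of local minimizers of H in (t',t'') are finite, M₁ ≠ ∅ has
   cardinality j, and m := max({H(α) : α ∈ M₂} ∪ {0}) < M := min{H(α) : α ∈ M₁}, then for
   every λ ∈ (m,M) the map P_λ has at least 2j fixed points in D_λ, i.e. H(α) = λ has at
   least 2j solutions in (t',t''). -/
theorem stmt14 (t' t'' sLo : ℝ) (sHi : EReal) (a Q R H : ℝ → ℝ)
    (ht' : 0 ≤ t') (ht : t' < t'')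
    (ha_cont : ContinuousOn a (Icc t' t''))
    (ha_t' : a t' = 0) (ha_t'' : a t'' = 0)
    (ha_pos : ∀ α ∈ Ioo t' t'', 0 < a α)
    (hsLo : 0 ≤ sLo) (hs : (sLo : EReal) < sHi)
    (hQ_cont : ContinuousOn Q {s : ℝ | sLo < s ∧ (s : EReal) < sHi})
    (hQ_pos : ∀ s : ℝ, sLo < s → (s : EReal) < sHi → 0 < Q s)
    (hQ_zero : Tendsto Q (𝓝[>] sLo) (𝓝 0))
    (hQ_top : Tendsto Q (comap (fun s : ℝ => (s : EReal)) (𝓝[<] sHi)) atTop)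
    (hQ_mono : StrictMonoOn Q {s : ℝ | sLo < s ∧ (s : EReal) < sHi})
    (hR₁ : ∀ y : ℝ, 0 < y → (sLo < R y ∧ ((R y : ℝ) : EReal) < sHi) ∧ Q (R y) = y)
    (hR₂ : ∀ s : ℝ, sLo < s → (s : EReal) < sHi → R (Q s) = s)
    (hH : ∀ α, H α = a α * R α)
    (D : ℝ → Set ℝ)
    (hD : ∀ l : ℝ, D l =
      {α : ℝ | α ∈ Ioo t' t'' ∧ sLo < l / a α ∧ ((l / a α : ℝ) : EReal) < sHi})
    (M₁ M₂ : Set ℝ)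
    (hM₁ : M₁ = {α : ℝ | α ∈ Ioo t' t'' ∧ IsLocalMax H α})
    (hM₂ : M₂ = {α : ℝ | α ∈ Ioo t' t'' ∧ IsLocalMin H α})
    (hM₁fin : M₁.Finite) (hM₂fin : M₂.Finite) (hM₁ne : M₁.Nonempty)
    (m M : ℝ)
    (hm : m = sSup (insert 0 (H '' M₂)))
    (hM : M = sInf (H '' M₁))
    (hmM : m < M) :
    ∀ lam : ℝ, m < lam → lam < M →
      ∃ S : Finset ℝ, 2 * M₁.ncard ≤ S.card ∧
        ∀ α ∈ S, α ∈ D lam ∧ Q (lam / a α) = α ∧ α ∈ Ioo t' t'' ∧ H α = lam := by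
  classical
  intro lam hlam1 hlam2
  have ht''pos : 0 < t'' := lt_of_le_of_lt ht' ht
  have hbddm : BddAbove (insert 0 (H '' M₂)) := ((hM₂fin.image H).insert 0).bddAbove
  have hm0 : 0 ≤ m := hm ▸ le_csSup hbddm (mem_insert _ _)
  have hlampos : 0 < lam := lt_of_le_of_lt hm0 hlam1
  have hHM₁ : ∀ p ∈ M₁, lam < H p := fun p hp =>
    lt_of_lt_of_le hlam2 (hM ▸ csInf_le (hM₁fin.image H).bddBelow ⟨p, hp, rfl⟩)
  have hHM₂ : ∀ q ∈ M₂, H q < lam := fun q hq =>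
    lt_of_le_of_lt (hm ▸ le_csSup hbddm (mem_insert_of_mem _ ⟨q, hq, rfl⟩)) hlam1
  have hM₁sub : ∀ p ∈ M₁, p ∈ Ioo t' t'' ∧ IsLocalMax H p := by
    intro p hp; rw [hM₁] at hp; exact hp
  -- R is strictly monotone on positive reals
  have hRlt : ∀ y z : ℝ, 0 < y → y < z → R y < R z := by
    intro y z hy hyz
    obtain ⟨⟨hy1, hy2⟩, hQy⟩ := hR₁ y hy
    obtain ⟨⟨hz1, hz2⟩, hQz⟩ := hR₁ z (hy.trans hyz)
    by_contra hle
    push_neg at hle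
    rcases eq_or_lt_of_le hle with h | h
    · rw [← hQy, ← hQz, h] at hyz; exact lt_irrefl _ hyz
    · have := hQ_mono ⟨hz1, hz2⟩ ⟨hy1, hy2⟩ h
      rw [hQy, hQz] at this
      exact absurd hyz (not_lt.2 this.le)
  -- R is continuous at every positive real
  have hRcont : ∀ y : ℝ, 0 < y → ContinuousAt R y := by
    intro y hy
    have hmono : StrictMonoOn R (Ioi (0 : ℝ)) := fun u hu v _ huv => hRlt u v hu huv
    obtain ⟨⟨hy1, hy2⟩, hQy⟩ := hR₁ y hy
    refine hmono.continuousAt_of_exists_between (Ioi_mem_nhds hy) ?_ ?_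
    · intro b hb
      obtain ⟨s', hs'1, hs'2⟩ : ∃ s', max b sLo < s' ∧ s' < R y := exists_between (max_lt hb hy1)
      have hs'lo : sLo < s' := lt_of_le_of_lt (le_max_right _ _) hs'1
      have hs'hi : (s' : EReal) < sHi := lt_trans (EReal.coe_lt_coe_iff.2 hs'2) hy2
      refine ⟨Q s', hQ_pos s' hs'lo hs'hi, ?_⟩
      rw [hR₂ s' hs'lo hs'hi]
      exact ⟨(le_max_left _ _).trans hs'1.le, hs'2⟩
    · intro b hb
      have hw : ((R y : ℝ) : EReal) < min sHi (b : EReal) :=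
        lt_min hy2 (EReal.coe_lt_coe_iff.2 hb)
      obtain ⟨z, hz1, hz2⟩ := exists_between hw
      have hztop : z ≠ ⊤ := ne_top_of_lt (lt_of_lt_of_le hz2 (min_le_right _ _))
      have hzbot : z ≠ ⊥ := ne_bot_of_gt hz1
      lift z to ℝ using ⟨hztop, hzbot⟩ with s'
      have h1 : R y < s' := EReal.coe_lt_coe_iff.1 hz1
      have h2 : (s' : EReal) < sHi := lt_of_lt_of_le hz2 (min_le_left _ _)
      have h3 : s' < b := EReal.coe_lt_coe_iff.1 (lt_of_lt_of_le hz2 (min_le_right _ _))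
      have hs'lo : sLo < s' := hy1.trans h1
      refine ⟨Q s', hQ_pos s' hs'lo h2, ?_⟩
      rw [hR₂ s' hs'lo h2]
      exact ⟨h1, h3.le⟩
  -- H is continuous on the open interval
  have hHcont : ContinuousOn H (Ioo t' t'') := by
    intro x hx
    have hx0 : 0 < x := lt_of_le_of_lt ht' hx.1
    have hc : ContinuousWithinAt (fun α => a α * R α) (Ioo t' t'') x :=
      ((ha_cont.mono Ioo_subset_Icc_self) x hx).mul (hRcont x hx0).continuousWithinAt
    exact hc.congr (fun y _ => hH y) (hH x)
  -- solutions of H α = lam are fixed points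
  have hfix : ∀ α, α ∈ Ioo t' t'' → H α = lam → α ∈ D lam ∧ Q (lam / a α) = α := by
    intro α hα hHα
    have haα : 0 < a α := ha_pos α hα
    have hα0 : 0 < α := lt_of_le_of_lt ht' hα.1
    obtain ⟨⟨h1, h2⟩, hQα⟩ := hR₁ α hα0
    have hRα : R α = lam / a α := by
      rw [eq_div_iff haα.ne', mul_comm, ← hH α]; exact hHα
    constructor
    · rw [hD lam]
      exact ⟨hα, hRα ▸ h1, hRα ▸ h2⟩
    · rw [← hRα]
      exact hQα
  -- finite set of local maximizers
  set F : Finset ℝ := hM₁fin.toFinset with hF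
  have hFmem : ∀ p, p ∈ F ↔ p ∈ M₁ := fun p => hM₁fin.mem_toFinset
  have hFne : F.Nonempty := by
    obtain ⟨p, hp⟩ := hM₁ne; exact ⟨p, (hFmem p).2 hp⟩
  set pmin := F.min' hFne with hpmin_def
  set pmax := F.max' hFne with hpmax_def
  have hpminM : pmin ∈ M₁ := (hFmem _).1 (F.min'_mem hFne)
  have hpmaxM : pmax ∈ M₁ := (hFmem _).1 (F.max'_mem hFne)
  have hpminI : pmin ∈ Ioo t' t'' := (hM₁sub pmin hpminM).1
  have hpmaxI : pmax ∈ Ioo t' t'' := (hM₁sub pmax hpmaxM).1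
  obtain ⟨⟨hRt''lo, _⟩, _⟩ := hR₁ t'' ht''pos
  have hRt''pos : 0 < R t'' := lt_of_le_of_lt hsLo hRt''lo
  have hc : 0 < lam / R t'' := div_pos hlampos hRt''pos
  -- a small value of H just to the left of pmin
  obtain ⟨l₀, hl₀mem, hl₀H⟩ : ∃ l₀, l₀ ∈ Ioo t' pmin ∧ H l₀ < lam := by
    have htend : Tendsto a (𝓝[Ioo t' pmin] t') (𝓝 0) := by
      have h1 : ContinuousWithinAt a (Icc t' t'') t' := ha_cont t' (left_mem_Icc.2 ht.le)
      rw [ContinuousWithinAt, ha_t'] at h1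
      exact h1.mono_left (nhdsWithin_mono _
        (fun x hx => ⟨hx.1.le, (hx.2.trans hpminI.2).le⟩))
    have hne : (𝓝[Ioo t' pmin] t').NeBot := by
      rw [nhdsWithin_Ioo_eq_nhdsGT hpminI.1]; infer_instance
    obtain ⟨l₀, hlt, hmem⟩ := ((htend.eventually_lt_const hc).and eventually_mem_nhdsWithin).exists
    refine ⟨l₀, hmem, ?_⟩
    have hl₀I : l₀ ∈ Ioo t' t'' := ⟨hmem.1, hmem.2.trans hpminI.2⟩
    have ha0 : 0 < a l₀ := ha_pos _ hl₀I
    have hl₀0 : 0 < l₀ := lt_of_le_of_lt ht' hl₀I.1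
    have hR1 : R l₀ < R t'' := hRlt l₀ t'' hl₀0 hl₀I.2
    have hR0 : 0 < R l₀ := lt_of_le_of_lt hsLo (hR₁ l₀ hl₀0).1.1
    calc H l₀ = a l₀ * R l₀ := hH l₀
      _ < (lam / R t'') * R t'' := mul_lt_mul'' hlt hR1 ha0.le hR0.le
      _ = lam := div_mul_cancel₀ lam hRt''pos.ne'
  -- a small value of H just to the right of pmax
  obtain ⟨r₀, hr₀mem, hr₀H⟩ : ∃ r₀, r₀ ∈ Ioo pmax t'' ∧ H r₀ < lam := by
    have htend : Tendsto a (𝓝[Ioo pmax t''] t'') (𝓝 0) := by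
      have h1 : ContinuousWithinAt a (Icc t' t'') t'' := ha_cont t'' (right_mem_Icc.2 ht.le)
      rw [ContinuousWithinAt, ha_t''] at h1
      exact h1.mono_left (nhdsWithin_mono _
        (fun x hx => ⟨(hpmaxI.1.trans hx.1).le, hx.2.le⟩))
    have hne : (𝓝[Ioo pmax t''] t'').NeBot := by
      rw [nhdsWithin_Ioo_eq_nhdsLT hpmaxI.2]; infer_instance
    obtain ⟨r₀, hlt, hmem⟩ := ((htend.eventually_lt_const hc).and eventually_mem_nhdsWithin).exists
    refine ⟨r₀, hmem, ?_⟩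
    have hr₀I : r₀ ∈ Ioo t' t'' := ⟨hpmaxI.1.trans hmem.1, hmem.2⟩
    have ha0 : 0 < a r₀ := ha_pos _ hr₀I
    have hr₀0 : 0 < r₀ := lt_of_le_of_lt ht' hr₀I.1
    have hR1 : R r₀ < R t'' := hRlt r₀ t'' hr₀0 hr₀I.2
    have hR0 : 0 < R r₀ := lt_of_le_of_lt hsLo (hR₁ r₀ hr₀0).1.1
    calc H r₀ = a r₀ * R r₀ := hH r₀
      _ < (lam / R t'') * R t'' := mul_lt_mul'' hlt hR1 ha0.le hR0.le
      _ = lam := div_mul_cancel₀ lam hRt''pos.ne'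
  have hl₀I : l₀ ∈ Ioo t' t'' := ⟨hl₀mem.1, hl₀mem.2.trans hpminI.2⟩
  have hr₀I : r₀ ∈ Ioo t' t'' := ⟨hpmaxI.1.trans hr₀mem.1, hr₀mem.2⟩
  -- between two local maximizers there is a point with small H value
  have hlocmin : ∀ p p', p ∈ M₁ → p' ∈ M₁ → p < p' → ∃ q ∈ Ioo p p', H q < lam := by
    intro p p' hp hp' hpp'
    obtain ⟨hpI, hpmax'⟩ := hM₁sub p hp
    obtain ⟨hp'I, hp'max'⟩ := hM₁sub p' hp'
    have hsub : Icc p p' ⊆ Ioo t' t'' := fun x hx =>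
      ⟨lt_of_lt_of_le hpI.1 hx.1, lt_of_le_of_lt hx.2 hp'I.2⟩
    obtain ⟨q, hq, hqmin⟩ := isCompact_Icc.exists_isMinOn (nonempty_Icc.2 hpp'.le)
      (hHcont.mono hsub)
    have hconstFalse : ∀ (c d v : ℝ), c < d → Ioo c d ⊆ Ioo t' t'' →
        (∀ x ∈ Ioo c d, H x = v) → False := by
      intro c d v hcd hsub' hval
      have hsubM : Ioo c d ⊆ M₁ := by
        intro x hx
        rw [hM₁]
        refine ⟨hsub' hx, ?_⟩
        refine Filter.eventually_of_mem (isOpen_Ioo.mem_nhds hx) (fun y hy => ?_)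
        exact le_of_eq (by rw [hval y hy, hval x hx])
      exact absurd (hM₁fin.subset hsubM) (Set.Ioo_infinite hcd)
    rcases eq_or_lt_of_le hq.1 with h1 | h1
    · -- q = p : contradiction
      exfalso
      obtain ⟨ε, hε, hball⟩ := Metric.eventually_nhds_iff.1 hpmax'
      have hpd : p < min (p + ε) p' := lt_min (by linarith) hpp'
      refine hconstFalse p (min (p + ε) p') (H p) hpd
        (fun x hx => ⟨lt_of_lt_of_le hpI.1 hx.1.le,
          lt_of_lt_of_le (lt_of_lt_of_le hx.2 (min_le_right _ _)) hp'I.2.le⟩) ?_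
      intro x hx
      have hxIcc : x ∈ Icc p p' :=
        ⟨hx.1.le, (lt_of_lt_of_le hx.2 (min_le_right _ _)).le⟩
      have hle : H x ≤ H p := by
        apply hball
        rw [Real.dist_eq, abs_of_pos (by linarith [hx.1] : (0:ℝ) < x - p)]
        have := lt_of_lt_of_le hx.2 (min_le_left _ _)
        linarith
      have hge : H p ≤ H x := by
        have := hqmin hxIcc
        rwa [← h1] at this
      exact le_antisymm hle hge
    rcases eq_or_lt_of_le hq.2 with h2 | h2
    · -- q = p' : contradiction
      exfalso
      obtain ⟨ε, hε, hball⟩ := Metric.eventually_nhds_iff.1 hp'max'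
      have hpd : max (p' - ε) p < p' := max_lt (by linarith) hpp'
      refine hconstFalse (max (p' - ε) p) p' (H p') hpd
        (fun x hx => ⟨lt_of_lt_of_le hpI.1 (le_of_lt (lt_of_le_of_lt (le_max_right _ _) hx.1)),
          lt_trans hx.2 hp'I.2⟩) ?_
      intro x hx
      have hxIcc : x ∈ Icc p p' :=
        ⟨(le_max_right _ _).trans hx.1.le, hx.2.le⟩
      have hle : H x ≤ H p' := by
        apply hball
        rw [Real.dist_eq, abs_of_neg (by linarith [hx.2] : x - p' < 0)]
        have := lt_of_le_of_lt (le_max_left _ _) hx.1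
        linarith
      have hge : H p' ≤ H x := by
        have := hqmin hxIcc
        rwa [h2] at this
      exact le_antisymm hle hge
    · -- q interior : local minimum
      have hqI : q ∈ Ioo p p' := ⟨h1, h2⟩
      have hmin : IsLocalMin H q := hqmin.isLocalMin (Icc_mem_nhds h1 h2)
      have hqM₂ : q ∈ M₂ := by rw [hM₂]; exact ⟨hsub hq, hmin⟩
      exact ⟨q, hqI, hHM₂ q hqM₂⟩
  -- the canonical solutions on each side of a maximizer
  set xm : ℝ → ℝ := fun p => sSup {x | x ∈ Icc l₀ p ∧ H x ≤ lam} with hxm_def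
  set xp : ℝ → ℝ := fun p => sInf {x | x ∈ Icc p r₀ ∧ H x ≤ lam} with hxp_def
  have hxmspec : ∀ p ∈ M₁, (l₀ < xm p ∧ xm p < p) ∧ H (xm p) = lam ∧
      ∀ z, z ∈ Icc l₀ p → H z ≤ lam → z ≤ xm p := by
    intro p hp
    obtain ⟨hpI, _⟩ := hM₁sub p hp
    have hl₀p : l₀ < p := lt_of_lt_of_le hl₀mem.2 (F.min'_le p ((hFmem p).2 hp))
    set A := {x | x ∈ Icc l₀ p ∧ H x ≤ lam} with hA
    have hIccsub : Icc l₀ p ⊆ Ioo t' t'' := fun x hx =>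
      ⟨lt_of_lt_of_le hl₀I.1 hx.1, lt_of_le_of_lt hx.2 hpI.2⟩
    have hAne : l₀ ∈ A := ⟨⟨le_refl _, hl₀p.le⟩, hl₀H.le⟩
    have hAbdd : BddAbove A := ⟨p, fun x hx => hx.1.2⟩
    have hclosed : IsClosed A := by
      have hAeq : A = Icc l₀ p ∩ H ⁻¹' (Iic lam) := by
        ext x; simp only [hA, mem_setOf_eq, mem_inter_iff, mem_preimage, mem_Iic]
      rw [hAeq]
      exact (hHcont.mono hIccsub).preimage_isClosed_of_isClosed isClosed_Icc isClosed_Iic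
    have hmem : xm p ∈ A := hclosed.csSup_mem ⟨l₀, hAne⟩ hAbdd
    have hub : ∀ z, z ∈ Icc l₀ p → H z ≤ lam → z ≤ xm p := fun z h1 h2 =>
      le_csSup hAbdd ⟨h1, h2⟩
    have hlam_p : lam < H p := hHM₁ p hp
    have hlt : xm p < p :=
      lt_of_le_of_ne hmem.1.2 (fun h => absurd hmem.2 (not_le.2 (by rw [h]; exact hlam_p)))
    have hxmI : xm p ∈ Ioo t' t'' := hIccsub hmem.1
    have hge : lam ≤ H (xm p) := by
      by_contra hlt2
      push_neg at hlt2
      have hca : ContinuousAt H (xm p) := hHcont.continuousAt (isOpen_Ioo.mem_nhds hxmI)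
      have hev : ∀ᶠ x in 𝓝 (xm p), H x < lam := hca.eventually_lt_const hlt2
      have hne2 : (𝓝[Ioo (xm p) p] (xm p)).NeBot := by
        rw [nhdsWithin_Ioo_eq_nhdsGT hlt]; infer_instance
      obtain ⟨z, hz1, hz2⟩ :=
        ((hev.filter_mono (nhdsWithin_le_nhds (s := Ioo (xm p) p))).and
          eventually_mem_nhdsWithin).exists
      have hzle : z ≤ xm p := hub z ⟨hmem.1.1.trans hz2.1.le, hz2.2.le⟩ hz1.le
      exact absurd hzle (not_le.2 hz2.1)
    have hHeq : H (xm p) = lam := le_antisymm hmem.2 hge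
    have hl₀lt : l₀ < xm p := by
      rcases eq_or_lt_of_le hmem.1.1 with h | h
      · exfalso; rw [← h] at hHeq; exact hl₀H.ne hHeq
      · exact h
    exact ⟨⟨hl₀lt, hlt⟩, hHeq, hub⟩
  have hxpspec : ∀ p ∈ M₁, (p < xp p ∧ xp p ≤ r₀) ∧ H (xp p) = lam ∧
      ∀ z, z ∈ Icc p r₀ → H z ≤ lam → xp p ≤ z := by
    intro p hp
    obtain ⟨hpI, _⟩ := hM₁sub p hp
    have hpr₀ : p < r₀ := lt_of_le_of_lt (F.le_max' p ((hFmem p).2 hp)) hr₀mem.1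
    set A := {x | x ∈ Icc p r₀ ∧ H x ≤ lam} with hA
    have hIccsub : Icc p r₀ ⊆ Ioo t' t'' := fun x hx =>
      ⟨lt_of_lt_of_le hpI.1 hx.1, lt_of_le_of_lt hx.2 hr₀I.2⟩
    have hAne : r₀ ∈ A := ⟨⟨hpr₀.le, le_refl _⟩, hr₀H.le⟩
    have hAbdd : BddBelow A := ⟨p, fun x hx => hx.1.1⟩
    have hclosed : IsClosed A := by
      have hAeq : A = Icc p r₀ ∩ H ⁻¹' (Iic lam) := by
        ext x; simp only [hA, mem_setOf_eq, mem_inter_iff, mem_preimage, mem_Iic]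
      rw [hAeq]
      exact (hHcont.mono hIccsub).preimage_isClosed_of_isClosed isClosed_Icc isClosed_Iic
    have hmem : xp p ∈ A := hclosed.csInf_mem ⟨r₀, hAne⟩ hAbdd
    have hlb : ∀ z, z ∈ Icc p r₀ → H z ≤ lam → xp p ≤ z := fun z h1 h2 =>
      csInf_le hAbdd ⟨h1, h2⟩
    have hlam_p : lam < H p := hHM₁ p hp
    have hlt : p < xp p :=
      lt_of_le_of_ne hmem.1.1 (fun h => absurd hmem.2 (not_le.2 (by rw [← h]; exact hlam_p)))
    have hxpI : xp p ∈ Ioo t' t'' := hIccsub hmem.1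
    have hge : lam ≤ H (xp p) := by
      by_contra hlt2
      push_neg at hlt2
      have hca : ContinuousAt H (xp p) := hHcont.continuousAt (isOpen_Ioo.mem_nhds hxpI)
      have hev : ∀ᶠ x in 𝓝 (xp p), H x < lam := hca.eventually_lt_const hlt2
      have hne2 : (𝓝[Ioo p (xp p)] (xp p)).NeBot := by
        rw [nhdsWithin_Ioo_eq_nhdsLT hlt]; infer_instance
      obtain ⟨z, hz1, hz2⟩ :=
        ((hev.filter_mono (nhdsWithin_le_nhds (s := Ioo p (xp p)))).and
          eventually_mem_nhdsWithin).exists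
      have hzle : xp p ≤ z := hlb z ⟨hz2.1.le, hz2.2.le.trans hmem.1.2⟩ hz1.le
      exact absurd hzle (not_le.2 hz2.2)
    have hHeq : H (xp p) = lam := le_antisymm hmem.2 hge
    exact ⟨⟨hlt, hmem.1.2⟩, hHeq, hlb⟩
  -- ordering : xp p < xm p' when p < p'
  have horder : ∀ p ∈ M₁, ∀ p' ∈ M₁, p < p' → xp p < xm p' := by
    intro p hp p' hp' hpp'
    obtain ⟨q, hqmem, hqlt⟩ := hlocmin p p' hp hp' hpp'
    have hqr₀ : q ≤ r₀ :=
      (hqmem.2.trans (lt_of_le_of_lt (F.le_max' p' ((hFmem p').2 hp')) hr₀mem.1)).le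
    have hql₀ : l₀ ≤ q :=
      (lt_of_lt_of_le hl₀mem.2 ((F.min'_le p ((hFmem p).2 hp)).trans hqmem.1.le)).le
    have h1 : xp p ≤ q := (hxpspec p hp).2.2 q ⟨hqmem.1.le, hqr₀⟩ hqlt.le
    have h2 : q ≤ xm p' := (hxmspec p' hp').2.2 q ⟨hql₀, hqmem.2.le⟩ hqlt.le
    have h1' : xp p < q :=
      lt_of_le_of_ne h1 (fun h => absurd ((hxpspec p hp).2.1) (by rw [h]; exact hqlt.ne))
    exact lt_of_lt_of_le h1' h2
  -- chain : xm p < p < xp p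
  have hchain : ∀ p ∈ M₁, xm p < p ∧ p < xp p := fun p hp =>
    ⟨(hxmspec p hp).1.2, (hxpspec p hp).1.1⟩
  -- the final set of solutions
  refine ⟨F.image xm ∪ F.image xp, ?_, ?_⟩
  · have hinjm : Set.InjOn xm ↑F := by
      intro u hu v hv heq
      have hu' := (hFmem u).1 hu
      have hv' := (hFmem v).1 hv
      by_contra hne
      rcases Ne.lt_or_gt hne with h | h
      · have : xm u < xm v :=
          lt_trans (lt_trans (hchain u hu').1 (hchain u hu').2) (horder u hu' v hv' h)
        exact this.ne heq
      · have : xm v < xm u :=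
          lt_trans (lt_trans (hchain v hv').1 (hchain v hv').2) (horder v hv' u hu' h)
        exact this.ne heq.symm
    have hinjp : Set.InjOn xp ↑F := by
      intro u hu v hv heq
      have hu' := (hFmem u).1 hu
      have hv' := (hFmem v).1 hv
      by_contra hne
      rcases Ne.lt_or_gt hne with h | h
      · have : xp u < xp v :=
          lt_trans (horder u hu' v hv' h) (lt_trans (hchain v hv').1 (hchain v hv').2)
        exact this.ne heq
      · have : xp v < xp u :=
          lt_trans (horder v hv' u hu' h) (lt_trans (hchain u hu').1 (hchain u hu').2)
        exact this.ne heq.symm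
    have hdisj : Disjoint (F.image xm) (F.image xp) := by
      rw [Finset.disjoint_left]
      intro x hx hx'
      obtain ⟨u, hu, rfl⟩ := Finset.mem_image.1 hx
      obtain ⟨v, hv, heq⟩ := Finset.mem_image.1 hx'
      have hu' := (hFmem u).1 hu
      have hv' := (hFmem v).1 hv
      rcases le_or_gt u v with h | h
      · have h1 : xm u < xp v := by
          rcases eq_or_lt_of_le h with rfl | h
          · exact lt_trans (hchain u hu').1 (hchain u hu').2
          · exact lt_trans (lt_trans (lt_trans (hchain u hu').1 (hchain u hu').2)
              (horder u hu' v hv' h)) (lt_trans (hchain v hv').1 (hchain v hv').2)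
        exact h1.ne' heq
      · exact (horder v hv' u hu' h).ne heq
    rw [Finset.card_union_of_disjoint hdisj, Finset.card_image_of_injOn hinjm,
      Finset.card_image_of_injOn hinjp, Set.ncard_eq_toFinset_card M₁ hM₁fin, ← hF]
    omega
  · intro α hα
    rw [Finset.mem_union] at hα
    have hmain : α ∈ Ioo t' t'' ∧ H α = lam := by
      rcases hα with h | h
      · obtain ⟨u, hu, rfl⟩ := Finset.mem_image.1 h
        have hu' := (hFmem u).1 hu
        obtain ⟨⟨h1, h2⟩, h3, -⟩ := hxmspec u hu'
        exact ⟨⟨lt_trans hl₀I.1 h1, lt_trans h2 (hM₁sub u hu').1.2⟩, h3⟩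
      · obtain ⟨u, hu, rfl⟩ := Finset.mem_image.1 h
        have hu' := (hFmem u).1 hu
        obtain ⟨⟨h1, h2⟩, h3, -⟩ := hxpspec u hu'
        exact ⟨⟨lt_trans (hM₁sub u hu').1.1 h1, lt_of_le_of_lt h2 hr₀I.2⟩, h3⟩
    obtain ⟨hI, hHa⟩ := hmain
    obtain ⟨hD', hQ'⟩ := hfix α hI hHa
    exact ⟨hD', hQ', hI, hHa⟩
end

section
/- Assume p ≠ 2. Then λ_{0,i} := sup_{α∈(t_i,t_{i+1})} h(α) is finite, positive and attained, and: (i) if 0 < λ < λ_{0,i} there exist 0 < s₁ < s₂ such that, for j = 1,2, u = s_j·v is a solution of (P_g) with parameter λ and t_i < g(s_j·v) = C_v·s_j^γ < t_{i+1}; (ii) if λ = λ_{0,i} there exists at least one such s > 0; (iii) if λ > λ_{0,i} there exists no s > 0 with t_i < C_v·s^γ < t_{i+1} such that u = s·v is a solution of (P_g) with parameter λ. -/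
open Set Filter Topology

/-- The Laplacian of u : ℝᴺ → ℝ at x: the sum of the second partial derivatives. -/
noncomputable def lap {N : ℕ} (u : (Fin N → ℝ) → ℝ) (x : Fin N → ℝ) : ℝ :=
  ∑ i : Fin N, fderiv ℝ (fun y => fderiv ℝ u y (Pi.single i 1)) x (Pi.single i 1)

lemma lap_smul {N : ℕ} {Ω : Set (Fin N → ℝ)} (hΩo : IsOpen Ω)
    {v : (Fin N → ℝ) → ℝ} (hv : ContDiffOn ℝ 2 v Ω) (s : ℝ)
    {x : Fin N → ℝ} (hx : x ∈ Ω) : lap (s • v) x = s * lap v x := by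
  have hdiff : ∀ y ∈ Ω, DifferentiableAt ℝ v y := fun y hy =>
    ((hv.differentiableOn (by norm_num)) y hy).differentiableAt (hΩo.mem_nhds hy)
  have hv1 : ContDiffOn ℝ 1 (fderiv ℝ v) Ω := hv.fderiv_of_isOpen hΩo (by norm_num)
  unfold lap
  rw [Finset.mul_sum]
  refine Finset.sum_congr rfl fun i _ => ?_
  set e : Fin N → ℝ := Pi.single i 1
  have hF : DifferentiableAt ℝ (fun y => fderiv ℝ v y e) x := by
    have : DifferentiableAt ℝ (fderiv ℝ v) x :=
      ((hv1.differentiableOn (by norm_num)) x hx).differentiableAt (hΩo.mem_nhds hx)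
    exact this.clm_apply (differentiableAt_const e)
  have hE : (fun y => fderiv ℝ (s • v) y e) =ᶠ[𝓝 x] fun y => s * fderiv ℝ v y e := by
    filter_upwards [hΩo.mem_nhds hx] with y hy
    have : fderiv ℝ (s • v) y = s • fderiv ℝ v y := fderiv_const_smul (hdiff y hy) s
    rw [this]; rfl
  rw [hE.fderiv_eq]
  have : fderiv ℝ (fun y => s * fderiv ℝ v y e) x = s • fderiv ℝ (fun y => fderiv ℝ v y e) x :=
    fderiv_const_smul hF s
  rw [this]; rfl

/- Powerlike case, p ≠ 2: λ_{0,i} := sup_{(t_i,t_{i+1})} h is finite, positive and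
   attained; (i) for 0 < λ < λ_{0,i} there are two solutions u = s₁·v, s₂·v of (P_g) with
   t_i < C_v s^γ < t_{i+1}; (ii) for λ = λ_{0,i} at least one; (iii) for λ > λ_{0,i}
   none. -/
theorem stmt16 {N : ℕ} (Ω : Set (Fin N → ℝ)) (hΩo : IsOpen Ω) (hΩne : Ω.Nonempty)
    (p γ : ℝ) (hγ : 0 < γ) (hp : p ≠ 2)
    (v : (Fin N → ℝ) → ℝ) (hv : ContDiffOn ℝ 2 v Ω)
    (hv_pos : ∀ x ∈ Ω, 0 < v x)
    (hv_eq : ∀ x ∈ Ω, -lap v x = v x ^ (p - 1))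
    (g : ((Fin N → ℝ) → ℝ) → ℝ)
    (hg : ∀ c : ℝ, 0 < c → ∀ w : (Fin N → ℝ) → ℝ, g (c • w) = c ^ γ * g w)
    (hCv : 0 < g v)
    (ti ti1 : ℝ) (hti : 0 ≤ ti) (htt : ti < ti1)
    (a : ℝ → ℝ) (ha_cont : ContinuousOn a (Ici 0))
    (ha_nonneg : ∀ t : ℝ, 0 ≤ t → 0 ≤ a t)
    (hai : a ti = 0) (hai1 : a ti1 = 0)
    (ha_pos : ∀ α ∈ Ioo ti ti1, 0 < a α)
    (h : ℝ → ℝ)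
    (hh : ∀ α, h α = g v ^ ((p - 2) / γ) * a α * α ^ ((2 - p) / γ))
    (hmu0 : ti = 0 → 2 < p → Tendsto h (𝓝[>] (0 : ℝ)) (𝓝 0))
    (Sol : ℝ → ℝ → Prop)
    (hSol : ∀ lam s : ℝ, (Sol lam s ↔
      ∀ x ∈ Ω, -(a (g (s • v)) * lap (s • v) x) = lam * (s * v x) ^ (p - 1))) :
    ∃ lam₀ : ℝ, IsGreatest (h '' Ioo ti ti1) lam₀ ∧ 0 < lam₀ ∧
      (∀ lam : ℝ, 0 < lam → lam < lam₀ →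
        ∃ s₁ s₂ : ℝ, 0 < s₁ ∧ s₁ < s₂ ∧
          (Sol lam s₁ ∧ ti < g v * s₁ ^ γ ∧ g v * s₁ ^ γ < ti1) ∧
          (Sol lam s₂ ∧ ti < g v * s₂ ^ γ ∧ g v * s₂ ^ γ < ti1)) ∧
      (∃ s : ℝ, 0 < s ∧ Sol lam₀ s ∧ ti < g v * s ^ γ ∧ g v * s ^ γ < ti1) ∧
      (∀ lam : ℝ, lam₀ < lam →
        ¬∃ s : ℝ, 0 < s ∧ ti < g v * s ^ γ ∧ g v * s ^ γ < ti1 ∧ Sol lam s) := by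
  have hγ' : γ ≠ 0 := hγ.ne'
  have hfun : h = fun α => g v ^ ((p - 2) / γ) * a α * α ^ ((2 - p) / γ) := funext hh
  -- value of h at g v * s^γ
  have hval : ∀ s : ℝ, 0 < s → h (g v * s ^ γ) = a (g v * s ^ γ) * s ^ (2 - p) := by
    intro s hs
    have hsγ : (0:ℝ) < s ^ γ := Real.rpow_pos_of_pos hs γ
    rw [hh, Real.mul_rpow hCv.le hsγ.le, ← Real.rpow_mul hs.le]
    have h1 : γ * ((2 - p) / γ) = 2 - p := by field_simp
    rw [h1, show g v ^ ((p-2)/γ) * a (g v * s ^ γ) * (g v ^ ((2-p)/γ) * s ^ (2-p))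
       = (g v ^ ((p-2)/γ) * g v ^ ((2-p)/γ)) * (a (g v * s ^ γ) * s ^ (2-p)) from by ring,
       ← Real.rpow_add hCv]
    have h2 : (p-2)/γ + (2-p)/γ = 0 := by rw [← add_div]; simp
    rw [h2, Real.rpow_zero, one_mul]
  -- key characterization of solutions
  have hkey : ∀ s : ℝ, 0 < s → ∀ lam : ℝ, (Sol lam s ↔ lam = h (g v * s ^ γ)) := by
    intro s hs lam
    have hα : g (s • v) = g v * s ^ γ := by rw [hg s hs v]; ring
    have hsp : (0:ℝ) < s ^ (p-1) := Real.rpow_pos_of_pos hs _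
    have hs1 : h (g v * s ^ γ) * s ^ (p-1) = a (g v * s ^ γ) * s := by
      rw [hval s hs, mul_assoc, ← Real.rpow_add hs]
      norm_num
    have hscal : (a (g v * s ^ γ) * s = lam * s ^ (p-1)) ↔ lam = h (g v * s ^ γ) := by
      rw [← hs1]
      constructor
      · intro hE; exact mul_right_cancel₀ hsp.ne' hE.symm
      · intro hE; rw [hE]
    have heqx : ∀ x ∈ Ω,
        ((-(a (g (s • v)) * lap (s • v) x) = lam * (s * v x) ^ (p - 1)) ↔
          (a (g v * s ^ γ) * s * (v x ^ (p-1)) = lam * s ^ (p-1) * (v x ^ (p-1)))) := by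
      intro x hx
      have hvx : (0:ℝ) < v x := hv_pos x hx
      have hl : -(a (g (s • v)) * lap (s • v) x) = a (g v * s ^ γ) * s * (v x ^ (p-1)) := by
        rw [hα, lap_smul hΩo hv s hx, ← hv_eq x hx]; ring
      have hr : lam * (s * v x) ^ (p - 1) = lam * s ^ (p-1) * (v x ^ (p-1)) := by
        rw [Real.mul_rpow hs.le hvx.le]; ring
      rw [hl, hr]
    rw [hSol, ← hscal]
    constructor
    · intro H
      obtain ⟨x, hx⟩ := hΩne
      have hvx : (0:ℝ) < v x ^ (p-1) := Real.rpow_pos_of_pos (hv_pos x hx) _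
      exact mul_right_cancel₀ hvx.ne' (((heqx x hx).mp (H x hx)))
    · intro H x hx
      exact (heqx x hx).mpr (by rw [H])
  -- h vanishes at the endpoints
  have hep : (2-p)/γ ≠ 0 := div_ne_zero (sub_ne_zero.mpr (Ne.symm hp)) hγ'
  have hhti : h ti = 0 := by
    rcases eq_or_lt_of_le hti with h0 | h0
    · rw [hh, ← h0, Real.zero_rpow hep, mul_zero]
    · rw [hh, hai, mul_zero, zero_mul]
  have hhti1 : h ti1 = 0 := by rw [hh, hai1, mul_zero, zero_mul]
  -- continuity of h on [ti, ti1]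
  have hcont : ContinuousOn h (Icc ti ti1) := by
    intro α hα
    have hα0 : (0:ℝ) ≤ α := hti.trans hα.1
    rcases eq_or_lt_of_le hα0 with h0 | h0
    · -- α = 0, hence ti = 0
      subst h0
      have hti0 : ti = 0 := le_antisymm hα.1 hti
      have h00 : h 0 = 0 := hti0 ▸ hhti
      have hsub : Icc ti ti1 ⊆ Ici (0:ℝ) := fun y hy => hti.trans hy.1
      rcases lt_or_ge p 2 with hp2 | hp2
      · -- p < 2 : direct continuity
        rw [hfun]
        have hc1 : ContinuousWithinAt a (Icc ti ti1) 0 :=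
          (ha_cont 0 (by simp)).mono hsub
        have hc2 : ContinuousWithinAt (fun α : ℝ => α ^ ((2-p)/γ)) (Icc ti ti1) 0 :=
          (Real.continuousAt_rpow_const 0 _
            (Or.inr (div_nonneg (by linarith) hγ.le))).continuousWithinAt
        exact (continuousWithinAt_const.mul hc1).mul hc2
      · -- p > 2 : use the hypothesis μ₀ = 0
        have hpgt : 2 < p := lt_of_le_of_ne hp2 (Ne.symm hp)
        have htd : Tendsto h (𝓝[>] (0:ℝ)) (𝓝 0) := hmu0 hti0 hpgt
        have hpure : Tendsto h (pure (0:ℝ)) (𝓝 0) := by simpa [h00] using tendsto_pure_nhds h 0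
        have hIci : Tendsto h (𝓝[Ici 0] (0:ℝ)) (𝓝 0) := by
          have hins : Ici (0:ℝ) = insert 0 (Ioi 0) := Ioi_insert.symm
          rw [hins, nhdsWithin_insert, tendsto_sup]
          exact ⟨hpure, htd⟩
        have hle : 𝓝[Icc ti ti1] (0:ℝ) ≤ 𝓝[Ici 0] (0:ℝ) := nhdsWithin_mono _ hsub
        show Tendsto h (𝓝[Icc ti ti1] (0:ℝ)) (𝓝 (h 0))
        rw [h00]
        exact hIci.mono_left hle
    · -- 0 < α : continuity at α
      have haa : ContinuousAt a α := ha_cont.continuousAt (Ici_mem_nhds h0)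
      have : ContinuousAt h α := by
        rw [hfun]
        exact (continuousAt_const.mul haa).mul
          (Real.continuousAt_rpow_const α _ (Or.inl h0.ne'))
      exact this.continuousWithinAt
  -- the maximum
  obtain ⟨α₀, hα₀mem, hmax⟩ :=
    isCompact_Icc.exists_isMaxOn (nonempty_Icc.mpr htt.le) hcont
  have hαm : (ti + ti1)/2 ∈ Ioo ti ti1 := ⟨by linarith, by linarith⟩
  have hαmpos : (0:ℝ) < (ti + ti1)/2 := lt_of_le_of_lt hti hαm.1
  have hhm : 0 < h ((ti + ti1)/2) := by
    rw [hh]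
    exact mul_pos (mul_pos (Real.rpow_pos_of_pos hCv _) (ha_pos _ hαm))
      (Real.rpow_pos_of_pos hαmpos _)
  have hlam₀pos : 0 < h α₀ := lt_of_lt_of_le hhm (hmax (Ioo_subset_Icc_self hαm))
  have hα₀Ioo : α₀ ∈ Ioo ti ti1 := by
    constructor
    · rcases eq_or_lt_of_le hα₀mem.1 with h0 | h0
      · exact absurd (h0 ▸ hhti) hlam₀pos.ne'
      · exact h0
    · rcases eq_or_lt_of_le hα₀mem.2 with h0 | h0
      · exact absurd (h0 ▸ hhti1) hlam₀pos.ne'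
      · exact h0
  -- construct s from α
  have hmk : ∀ α : ℝ, 0 < α → ∃ s : ℝ, 0 < s ∧ g v * s ^ γ = α := by
    intro α hα
    refine ⟨(α / g v) ^ (1/γ), Real.rpow_pos_of_pos (div_pos hα hCv) _, ?_⟩
    rw [← Real.rpow_mul (div_pos hα hCv).le, one_div_mul_cancel hγ', Real.rpow_one,
      mul_div_cancel₀ _ hCv.ne']
  refine ⟨h α₀, ⟨⟨α₀, hα₀Ioo, rfl⟩, ?_⟩, hlam₀pos, ?_, ?_, ?_⟩
  · rintro _ ⟨β, hβ, rfl⟩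
    exact hmax (Ioo_subset_Icc_self hβ)
  · -- (i) two solutions
    intro lam hl hl'
    obtain ⟨α₁, hα₁mem, hα₁⟩ := intermediate_value_Icc hα₀mem.1
      (hcont.mono (Icc_subset_Icc_right hα₀mem.2))
      (show lam ∈ Icc (h ti) (h α₀) by rw [hhti]; exact ⟨hl.le, hl'.le⟩)
    obtain ⟨α₂, hα₂mem, hα₂⟩ := intermediate_value_Icc' hα₀mem.2
      (hcont.mono (Icc_subset_Icc_left hα₀mem.1))
      (show lam ∈ Icc (h ti1) (h α₀) by rw [hhti1]; exact ⟨hl.le, hl'.le⟩)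
    have hα₁ti : ti < α₁ := by
      rcases eq_or_lt_of_le hα₁mem.1 with h0 | h0
      · exact absurd (h0 ▸ hα₁ : h ti = lam) (by rw [hhti]; exact hl.ne)
      · exact h0
    have hα₁lt : α₁ < α₀ := by
      rcases eq_or_lt_of_le hα₁mem.2 with h0 | h0
      · exact absurd (h0 ▸ hα₁ : h α₀ = lam) hl'.ne'
      · exact h0
    have hα₂gt : α₀ < α₂ := by
      rcases eq_or_lt_of_le hα₂mem.1 with h0 | h0
      · exact absurd (h0 ▸ hα₂ : h α₀ = lam) hl'.ne'
      · exact h0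
    have hα₂ti1 : α₂ < ti1 := by
      rcases eq_or_lt_of_le hα₂mem.2 with h0 | h0
      · exact absurd (h0 ▸ hα₂ : h ti1 = lam) (by rw [hhti1]; exact hl.ne)
      · exact h0
    obtain ⟨s₁, hs₁, hseq₁⟩ := hmk α₁ (lt_of_le_of_lt hti hα₁ti)
    obtain ⟨s₂, hs₂, hseq₂⟩ := hmk α₂ (lt_of_le_of_lt hti (lt_trans hα₁ti (hα₁lt.trans hα₂gt)))
    have hslt : s₁ < s₂ := by
      by_contra hcon
      push_neg at hcon
      have : s₂ ^ γ ≤ s₁ ^ γ := Real.rpow_le_rpow hs₂.le hcon hγ.le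
      have : g v * s₂ ^ γ ≤ g v * s₁ ^ γ := by
        exact mul_le_mul_of_nonneg_left this hCv.le
      rw [hseq₁, hseq₂] at this
      linarith [hα₁lt.trans hα₂gt]
    refine ⟨s₁, s₂, hs₁, hslt, ⟨?_, ?_, ?_⟩, ⟨?_, ?_, ?_⟩⟩
    · exact (hkey s₁ hs₁ lam).mpr (by rw [hseq₁, hα₁])
    · rw [hseq₁]; exact hα₁ti
    · rw [hseq₁]; exact hα₁lt.trans (hα₂gt.trans hα₂ti1)
    · exact (hkey s₂ hs₂ lam).mpr (by rw [hseq₂, hα₂])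
    · rw [hseq₂]; exact lt_trans hα₁ti (hα₁lt.trans hα₂gt)
    · rw [hseq₂]; exact hα₂ti1
  · -- (ii) one solution for lam₀
    obtain ⟨s, hs, hseq⟩ := hmk α₀ (lt_of_le_of_lt hti hα₀Ioo.1)
    exact ⟨s, hs, (hkey s hs _).mpr (by rw [hseq]),
      by rw [hseq]; exact hα₀Ioo.1, by rw [hseq]; exact hα₀Ioo.2⟩
  · -- (iii) no solution for lam > lam₀
    rintro lam hl ⟨s, hs, h1, h2, hS⟩
    have := (hkey s hs lam).mp hS
    have hle : h (g v * s ^ γ) ≤ h α₀ := hmax (Ioo_subset_Icc_self ⟨h1, h2⟩)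
    rw [← this] at hle
    exact absurd hl (not_lt.mpr hle)
end

section
/- Assume p ≠ 2 and that the map α ↦ a(α)·α^{(2−p)/γ} is strictly concave on (t_i,t_{i+1}). Then for every λ with 0 < λ < λ_{0,i} there exist exactly two values s > 0 such that u = s·v is a solution of (P_g) with parameter λ and t_i < C_v·s^γ < t_{i+1}, and for λ = λ_{0,i} there exists exactly one such value of s. -/
open Set Filter Topology

private lemma fderiv_const_smul'' {N : ℕ} (c : ℝ) (hc : c ≠ 0) (f : (Fin N → ℝ) → ℝ)
    (y : Fin N → ℝ) : fderiv ℝ (c • f) y = c • fderiv ℝ f y := by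
  by_cases hf : DifferentiableAt ℝ f y
  · exact fderiv_const_smul hf c
  · have h2 : ¬ DifferentiableAt ℝ (c • f) y := by
      intro h2
      apply hf
      have h3 := h2.const_smul c⁻¹
      have : (fun y => c⁻¹ • (c • f) y) = f := by
        funext z
        simp only [Pi.smul_apply, smul_eq_mul]
        rw [← mul_assoc, inv_mul_cancel₀ hc, one_mul]
      rwa [smul_smul, inv_mul_cancel₀ hc, one_smul] at h3
    rw [fderiv_zero_of_not_differentiableAt hf, fderiv_zero_of_not_differentiableAt h2,
      smul_zero]

private lemma lap_const_smul {N : ℕ} (c : ℝ) (hc : c ≠ 0) (u : (Fin N → ℝ) → ℝ)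
    (x : Fin N → ℝ) : lap (c • u) x = c * lap u x := by
  unfold lap
  rw [Finset.mul_sum]
  apply Finset.sum_congr rfl
  intro i _
  have h1 : (fun y => fderiv ℝ (c • u) y (Pi.single i 1))
      = c • (fun y => fderiv ℝ u y (Pi.single i 1)) := by
    funext y
    rw [fderiv_const_smul'' c hc]
    simp
  rw [h1, fderiv_const_smul'' c hc]
  simp

private lemma concave_three {s : Set ℝ} {f : ℝ → ℝ} (hf : StrictConcaveOn ℝ s f)
    {x y z lam : ℝ} (hx : x ∈ s) (hz : z ∈ s) (hxy : x < y) (hyz : y < z)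
    (hfx : f x = lam) (hfy : f y = lam) (hfz : f z = lam) : False := by
  have hzx : 0 < z - x := by linarith
  have ht : 0 < (z - y) / (z - x) := div_pos (by linarith) hzx
  have ht1 : 0 < 1 - (z - y) / (z - x) := by
    have : (z - y) / (z - x) < 1 := (div_lt_one hzx).2 (by linarith)
    linarith
  have hcomb : ((z - y) / (z - x)) • x + (1 - (z - y) / (z - x)) • z = y := by
    have hne : z - x ≠ 0 := ne_of_gt hzx
    simp only [smul_eq_mul]
    field_simp
    ring
  have h5 := hf.2 hx hz (ne_of_lt (lt_trans hxy hyz)) ht ht1 (by ring)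
  rw [hcomb, hfx, hfz, hfy] at h5
  simp only [smul_eq_mul] at h5
  nlinarith

private lemma concave_level_sets {t0 t1 : ℝ} (htt : t0 < t1) {h : ℝ → ℝ}
    (hcont : ContinuousOn h (Ioo t0 t1))
    (hconc : StrictConcaveOn ℝ (Ioo t0 t1) h)
    (hpos : ∀ α ∈ Ioo t0 t1, 0 < h α)
    (hl0 : Tendsto h (𝓝[>] t0) (𝓝 0))
    (hl1 : Tendsto h (𝓝[<] t1) (𝓝 0)) :
    ∃ αm ∈ Ioo t0 t1, (h αm = sSup (h '' Ioo t0 t1)) ∧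
      (∀ β ∈ Ioo t0 t1, h β = h αm → β = αm) ∧
      (∀ lam : ℝ, 0 < lam → lam < h αm →
        ∃ α₁ α₂, α₁ ∈ Ioo t0 t1 ∧ α₂ ∈ Ioo t0 t1 ∧ α₁ < α₂ ∧ h α₁ = lam ∧ h α₂ = lam ∧
          ∀ β ∈ Ioo t0 t1, h β = lam → β = α₁ ∨ β = α₂) := by
  set m := (t0 + t1) / 2 with hm_def
  have hm : m ∈ Ioo t0 t1 := ⟨by simp only [hm_def]; linarith, by simp only [hm_def]; linarith⟩
  have hm_pos : 0 < h m := hpos m hm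
  -- strips near the endpoints where h < h m
  obtain ⟨b0, hb0, hb0s⟩ := mem_nhdsGT_iff_exists_Ioo_subset.1
    ((hl0.eventually_lt_const hm_pos) : {α | h α < h m} ∈ 𝓝[>] t0)
  obtain ⟨c0, hc0, hc0s⟩ := mem_nhdsLT_iff_exists_Ioo_subset.1
    ((hl1.eventually_lt_const hm_pos) : {α | h α < h m} ∈ 𝓝[<] t1)
  set b := min b0 m with hb_def
  set c := max c0 m with hc_def
  have htb : t0 < b := lt_min hb0 hm.1
  have hbm : b ≤ m := min_le_right _ _
  have hmc : m ≤ c := le_max_right _ _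
  have hct : c < t1 := max_lt hc0 hm.2
  have hKsub : Icc b c ⊆ Ioo t0 t1 := fun α hα => ⟨lt_of_lt_of_le htb hα.1, lt_of_le_of_lt hα.2 hct⟩
  obtain ⟨αm, hαmK, hαmmax⟩ := (isCompact_Icc).exists_isMaxOn ⟨m, hbm, hmc⟩ (hcont.mono hKsub)
  have hαmI : αm ∈ Ioo t0 t1 := hKsub hαmK
  have hglobal : ∀ α ∈ Ioo t0 t1, h α ≤ h αm := by
    intro α hα
    rcases lt_or_ge α b with h1 | h1
    · have : h α < h m := hb0s ⟨hα.1, lt_of_lt_of_le h1 (min_le_left _ _)⟩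
      exact le_trans (le_of_lt this) (hαmmax ⟨hbm, hmc⟩)
    rcases le_or_gt α c with h2 | h2
    · exact hαmmax ⟨h1, h2⟩
    · have : h α < h m := hc0s ⟨lt_of_le_of_lt (le_max_left _ _) h2, hα.2⟩
      exact le_trans (le_of_lt this) (hαmmax ⟨hbm, hmc⟩)
  have hne : (h '' Ioo t0 t1).Nonempty := ⟨h m, mem_image_of_mem h hm⟩
  have hub : ∀ y ∈ h '' Ioo t0 t1, y ≤ h αm := by
    rintro y ⟨α, hα, rfl⟩; exact hglobal α hα
  have hsup : h αm = sSup (h '' Ioo t0 t1) :=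
    le_antisymm (le_csSup ⟨h αm, hub⟩ (mem_image_of_mem h hαmI)) (csSup_le hne hub)
  have huniqmax : ∀ β ∈ Ioo t0 t1, h β = h αm → β = αm := by
    intro β hβ hhβ
    by_contra hne2
    have h5 := hconc.2 hβ hαmI hne2 (by norm_num : (0:ℝ) < 1/2) (by norm_num : (0:ℝ) < 1/2)
      (by norm_num)
    have hmem : (1/2 : ℝ) • β + (1/2 : ℝ) • αm ∈ Ioo t0 t1 :=
      hconc.1 hβ hαmI (by norm_num) (by norm_num) (by norm_num)
    have h6 := hglobal _ hmem
    rw [hhβ] at h5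
    simp only [smul_eq_mul] at h5 h6
    nlinarith
  refine ⟨αm, hαmI, hsup, huniqmax, ?_⟩
  intro lam hlam hlam'
  -- left solution
  obtain ⟨b1, hb1, hb1s⟩ := mem_nhdsGT_iff_exists_Ioo_subset.1
    ((hl0.eventually_lt_const hlam) : {α | h α < lam} ∈ 𝓝[>] t0)
  obtain ⟨c1, hc1, hc1s⟩ := mem_nhdsLT_iff_exists_Ioo_subset.1
    ((hl1.eventually_lt_const hlam) : {α | h α < lam} ∈ 𝓝[<] t1)
  set β := (t0 + min b1 αm) / 2 with hβ_def
  have hminb : t0 < min b1 αm := lt_min hb1 hαmI.1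
  have hβ1 : t0 < β := by simp only [hβ_def]; linarith
  have hβ2 : β < min b1 αm := by simp only [hβ_def]; linarith
  have hβαm : β < αm := lt_of_lt_of_le hβ2 (min_le_right _ _)
  have hβI : β ∈ Ioo t0 t1 := ⟨hβ1, lt_trans hβαm hαmI.2⟩
  have hβlam : h β < lam := hb1s ⟨hβ1, lt_of_lt_of_le hβ2 (min_le_left _ _)⟩
  set β' := (max c1 αm + t1) / 2 with hβ'_def
  have hmaxc : max c1 αm < t1 := max_lt hc1 hαmI.2
  have hβ'1 : β' < t1 := by simp only [hβ'_def]; linarith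
  have hβ'2 : max c1 αm < β' := by simp only [hβ'_def]; linarith
  have hαmβ' : αm < β' := lt_of_le_of_lt (le_max_right _ _) hβ'2
  have hβ'I : β' ∈ Ioo t0 t1 := ⟨lt_trans hαmI.1 hαmβ', hβ'1⟩
  have hβ'lam : h β' < lam := hc1s ⟨lt_of_le_of_lt (le_max_left _ _) hβ'2, hβ'1⟩
  have hsub1 : Icc β αm ⊆ Ioo t0 t1 := fun α hα => ⟨lt_of_lt_of_le hβ1 hα.1,
    lt_of_le_of_lt hα.2 hαmI.2⟩
  have hsub2 : Icc αm β' ⊆ Ioo t0 t1 := fun α hα => ⟨lt_of_lt_of_le hαmI.1 hα.1,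
    lt_of_le_of_lt hα.2 hβ'1⟩
  obtain ⟨α₁, hα₁mem, hα₁⟩ := intermediate_value_Icc (le_of_lt hβαm) (hcont.mono hsub1)
    ⟨le_of_lt hβlam, le_of_lt hlam'⟩
  obtain ⟨α₂, hα₂mem, hα₂⟩ := intermediate_value_Icc' (le_of_lt hαmβ') (hcont.mono hsub2)
    ⟨le_of_lt hβ'lam, le_of_lt hlam'⟩
  have hα₁I : α₁ ∈ Ioo t0 t1 := hsub1 hα₁mem
  have hα₂I : α₂ ∈ Ioo t0 t1 := hsub2 hα₂mem
  have hα₁lt : α₁ < αm := lt_of_le_of_ne hα₁mem.2 (fun he => by rw [he] at hα₁; linarith)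
  have hα₂gt : αm < α₂ := lt_of_le_of_ne hα₂mem.1 (fun he => by rw [← he] at hα₂; linarith)
  have h12 : α₁ < α₂ := lt_trans hα₁lt hα₂gt
  refine ⟨α₁, α₂, hα₁I, hα₂I, h12, hα₁, hα₂, ?_⟩
  intro β2 hβ2I hβ2lam
  by_contra hcon
  push_neg at hcon
  obtain ⟨hne1, hne2⟩ := hcon
  rcases lt_trichotomy β2 α₁ with h1 | h1 | h1
  · exact concave_three hconc hβ2I hα₂I h1 h12 hβ2lam hα₁ hα₂
  · exact hne1 h1
  · rcases lt_trichotomy β2 α₂ with h2 | h2 | h2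
    · exact concave_three hconc hα₁I hα₂I h1 h2 hα₁ hβ2lam hα₂
    · exact hne2 h2
    · exact concave_three hconc hα₁I hβ2I h12 h2 hα₁ hα₂ hβ2lam

/- Powerlike case, p ≠ 2, with α ↦ a(α)·α^{(2−p)/γ} strictly concave on (t_i,t_{i+1}):
   for 0 < λ < λ_{0,i} there are exactly two values s > 0 with u = s·v a solution of
   (P_g) and t_i < C_v s^γ < t_{i+1}, and for λ = λ_{0,i} exactly one. -/
theorem stmt17 {N : ℕ} (Ω : Set (Fin N → ℝ)) (hΩo : IsOpen Ω) (hΩne : Ω.Nonempty)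
    (p γ : ℝ) (hγ : 0 < γ) (hp : p ≠ 2)
    (v : (Fin N → ℝ) → ℝ) (hv : ContDiffOn ℝ 2 v Ω)
    (hv_pos : ∀ x ∈ Ω, 0 < v x)
    (hv_eq : ∀ x ∈ Ω, -lap v x = v x ^ (p - 1))
    (g : ((Fin N → ℝ) → ℝ) → ℝ)
    (hg : ∀ c : ℝ, 0 < c → ∀ w : (Fin N → ℝ) → ℝ, g (c • w) = c ^ γ * g w)
    (hCv : 0 < g v)
    (ti ti1 : ℝ) (hti : 0 ≤ ti) (htt : ti < ti1)
    (a : ℝ → ℝ) (ha_cont : ContinuousOn a (Ici 0))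
    (ha_nonneg : ∀ t : ℝ, 0 ≤ t → 0 ≤ a t)
    (hai : a ti = 0) (hai1 : a ti1 = 0)
    (ha_pos : ∀ α ∈ Ioo ti ti1, 0 < a α)
    (h : ℝ → ℝ)
    (hh : ∀ α, h α = g v ^ ((p - 2) / γ) * a α * α ^ ((2 - p) / γ))
    (hmu0 : ti = 0 → 2 < p → Tendsto h (𝓝[>] (0 : ℝ)) (𝓝 0))
    (hconc : StrictConcaveOn ℝ (Ioo ti ti1) (fun α => a α * α ^ ((2 - p) / γ)))
    (Sol : ℝ → ℝ → Prop)
    (hSol : ∀ lam s : ℝ, (Sol lam s ↔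
      ∀ x ∈ Ω, -(a (g (s • v)) * lap (s • v) x) = lam * (s * v x) ^ (p - 1)))
    (lam₀ : ℝ) (hlam₀ : lam₀ = sSup (h '' Ioo ti ti1)) :
    (∀ lam : ℝ, 0 < lam → lam < lam₀ →
      ∃ s₁ s₂ : ℝ, 0 < s₁ ∧ s₁ < s₂ ∧
        (Sol lam s₁ ∧ ti < g v * s₁ ^ γ ∧ g v * s₁ ^ γ < ti1) ∧
        (Sol lam s₂ ∧ ti < g v * s₂ ^ γ ∧ g v * s₂ ^ γ < ti1) ∧
        (∀ s : ℝ, 0 < s → ti < g v * s ^ γ → g v * s ^ γ < ti1 → Sol lam s →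
          s = s₁ ∨ s = s₂)) ∧
    (∃! s : ℝ, 0 < s ∧ ti < g v * s ^ γ ∧ g v * s ^ γ < ti1 ∧ Sol lam₀ s) := by
  have hγne : γ ≠ 0 := ne_of_gt hγ
  have ht1pos : 0 < ti1 := lt_of_le_of_lt hti htt
  -- strict concavity of h
  have hconc' : StrictConcaveOn ℝ (Ioo ti ti1) h := by
    refine ⟨hconc.1, ?_⟩
    intro x hx y hy hxy ta tb hta htb htab
    have h5 := hconc.2 hx hy hxy hta htb htab
    simp only [smul_eq_mul] at h5 ⊢
    have hc0 : 0 < g v ^ ((p - 2) / γ) := Real.rpow_pos_of_pos hCv _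
    have h6 : ∀ α : ℝ, h α = g v ^ ((p - 2) / γ) * (a α * α ^ ((2 - p) / γ)) := by
      intro α; rw [hh]; ring
    rw [h6, h6, h6]
    nlinarith [mul_lt_mul_of_pos_left h5 hc0]
  -- continuity of h on the open interval
  have hcont : ContinuousOn h (Ioo ti ti1) := by
    have h1 : ContinuousOn (fun α : ℝ => g v ^ ((p - 2) / γ) * a α * α ^ ((2 - p) / γ))
        (Ioo ti ti1) := by
      apply ContinuousOn.mul
      · exact continuousOn_const.mul (ha_cont.mono (fun α hα => le_trans hti (le_of_lt hα.1)))
      · intro α hα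
        exact (Real.continuousAt_rpow_const α _
          (Or.inl (ne_of_gt (lt_of_le_of_lt hti hα.1)))).continuousWithinAt
    exact h1.congr (fun α _ => hh α)
  -- positivity of h on the open interval
  have hhpos : ∀ α ∈ Ioo ti ti1, 0 < h α := by
    intro α hα
    rw [hh]
    exact mul_pos (mul_pos (Real.rpow_pos_of_pos hCv _) (ha_pos α hα))
      (Real.rpow_pos_of_pos (lt_of_le_of_lt hti hα.1) _)
  -- limit of h at ti1 from the left
  have hl1 : Tendsto h (𝓝[<] ti1) (𝓝 0) := by
    have hca : ContinuousAt a ti1 :=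
      (ha_cont ti1 (le_of_lt ht1pos)).continuousAt
        (mem_of_superset (Ioi_mem_nhds ht1pos) Ioi_subset_Ici_self)
    have hcr : ContinuousAt (fun α : ℝ => α ^ ((2 - p) / γ)) ti1 :=
      Real.continuousAt_rpow_const ti1 _ (Or.inl (ne_of_gt ht1pos))
    have h2 : Tendsto (fun α => g v ^ ((p - 2) / γ) * a α * α ^ ((2 - p) / γ)) (𝓝 ti1)
        (𝓝 (g v ^ ((p - 2) / γ) * a ti1 * ti1 ^ ((2 - p) / γ))) :=
      ((tendsto_const_nhds.mul hca).mul hcr)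
    rw [hai1, mul_zero, zero_mul] at h2
    exact (h2.mono_left nhdsWithin_le_nhds).congr (fun α => (hh α).symm)
  -- limit of h at ti from the right
  have hl0 : Tendsto h (𝓝[>] ti) (𝓝 0) := by
    rcases eq_or_lt_of_le hti with h0 | h0
    · -- ti = 0
      rcases lt_trichotomy p 2 with hp2 | hp2 | hp2
      · -- p < 2 : exponent positive
        have he : 0 < (2 - p) / γ := div_pos (by linarith) hγ
        have hta : Tendsto a (𝓝[>] ti) (𝓝 0) := by
          have := (ha_cont ti hti).tendsto
          rw [hai] at this
          exact this.mono_left (nhdsWithin_mono _ (fun x hx => le_trans hti (le_of_lt hx)))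
        have htr : Tendsto (fun α : ℝ => α ^ ((2 - p) / γ)) (𝓝[>] ti) (𝓝 0) := by
          have hcr : ContinuousAt (fun α : ℝ => α ^ ((2 - p) / γ)) 0 :=
            Real.continuousAt_rpow_const 0 _ (Or.inr (le_of_lt he))
          have h3 := hcr.tendsto
          rw [Real.zero_rpow (ne_of_gt he)] at h3
          rw [← h0]
          exact h3.mono_left nhdsWithin_le_nhds
        have h2 : Tendsto (fun α => g v ^ ((p - 2) / γ) * a α * α ^ ((2 - p) / γ)) (𝓝[>] ti)
            (𝓝 (g v ^ ((p - 2) / γ) * 0 * 0)) :=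
          (tendsto_const_nhds.mul hta).mul htr
        rw [mul_zero] at h2
        exact h2.congr (fun α => (hh α).symm)
      · exact absurd hp2 hp
      · rw [← h0] at hmu0 ⊢
        exact hmu0 rfl hp2
    · -- ti > 0
      have hca : ContinuousAt a ti :=
        (ha_cont ti hti).continuousAt
          (mem_of_superset (Ioi_mem_nhds h0) Ioi_subset_Ici_self)
      have hcr : ContinuousAt (fun α : ℝ => α ^ ((2 - p) / γ)) ti :=
        Real.continuousAt_rpow_const ti _ (Or.inl (ne_of_gt h0))
      have h2 : Tendsto (fun α => g v ^ ((p - 2) / γ) * a α * α ^ ((2 - p) / γ)) (𝓝 ti)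
          (𝓝 (g v ^ ((p - 2) / γ) * a ti * ti ^ ((2 - p) / γ))) :=
        ((tendsto_const_nhds.mul hca).mul hcr)
      rw [hai, mul_zero, zero_mul] at h2
      exact (h2.mono_left nhdsWithin_le_nhds).congr (fun α => (hh α).symm)
  -- g of the scaled function
  have hgsv : ∀ s : ℝ, 0 < s → g (s • v) = g v * s ^ γ := by
    intro s hs; rw [hg s hs v]; ring
  -- key characterization of solutions
  have key : ∀ lam s : ℝ, 0 < s → (Sol lam s ↔ h (g v * s ^ γ) = lam) := by
    intro lam s hs
    obtain ⟨x₀, hx₀⟩ := hΩne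
    have hsne : s ≠ 0 := ne_of_gt hs
    have heq : ∀ x ∈ Ω, ((-(a (g (s • v)) * lap (s • v) x) = lam * (s * v x) ^ (p - 1))
        ↔ (a (g v * s ^ γ) * s * v x ^ (p - 1) = lam * (s ^ (p - 1) * v x ^ (p - 1)))) := by
      intro x hx
      rw [lap_const_smul s hsne, hgsv s hs,
          Real.mul_rpow (le_of_lt hs) (le_of_lt (hv_pos x hx))]
      have h3 : lap v x = -(v x ^ (p - 1)) := by linarith [hv_eq x hx]
      rw [h3]
      constructor <;> intro h4 <;> linarith
    have hhα : h (g v * s ^ γ) = a (g v * s ^ γ) * s ^ (2 - p) := by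
      have e1 : (g v * s ^ γ) ^ ((2 - p) / γ) = g v ^ ((2 - p) / γ) * s ^ (2 - p) := by
        rw [Real.mul_rpow (le_of_lt hCv) (Real.rpow_nonneg (le_of_lt hs) γ),
          ← Real.rpow_mul (le_of_lt hs)]
        congr 1
        field_simp
      have e2 : g v ^ ((p - 2) / γ) * g v ^ ((2 - p) / γ) = 1 := by
        rw [← Real.rpow_add hCv]
        have : (p - 2) / γ + (2 - p) / γ = 0 := by ring
        rw [this, Real.rpow_zero]
      rw [hh, e1]
      linear_combination a (g v * s ^ γ) * s ^ (2 - p) * e2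
    have hsp : s ^ (p - 1) * s ^ (1 - p) = 1 := by
      rw [← Real.rpow_add hs]
      have : p - 1 + (1 - p) = 0 := by ring
      rw [this, Real.rpow_zero]
    have hZ : s ^ ((2 : ℝ) - p) = s ^ ((1 : ℝ) - p) * s := by
      have e3 : (2 : ℝ) - p = (1 - p) + 1 := by ring
      rw [e3, Real.rpow_add hs, Real.rpow_one]
    rw [hSol lam s, hhα]
    constructor
    · intro hsol
      have h5 := (heq x₀ hx₀).1 (hsol x₀ hx₀)
      have hT : v x₀ ^ (p - 1) ≠ 0 := ne_of_gt (Real.rpow_pos_of_pos (hv_pos x₀ hx₀) _)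
      have h6 : a (g v * s ^ γ) * s = lam * s ^ (p - 1) := by
        have h5' : (a (g v * s ^ γ) * s) * v x₀ ^ (p - 1)
            = (lam * s ^ (p - 1)) * v x₀ ^ (p - 1) := by linarith
        exact mul_right_cancel₀ hT h5'
      linear_combination s ^ (1 - p) * h6 + lam * hsp + a (g v * s ^ γ) * hZ
    · intro h7 x hx
      apply (heq x hx).2
      have h6 : a (g v * s ^ γ) * s = lam * s ^ (p - 1) := by
        linear_combination s ^ (p - 1) * h7 - (a (g v * s ^ γ) * s) * hsp
          - (a (g v * s ^ γ) * s ^ (p - 1)) * hZ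
      linear_combination v x ^ (p - 1) * h6
  -- the inverse map from α to s
  have hsof : ∀ α : ℝ, ti < α → 0 < (α / g v) ^ (1 / γ)
      ∧ g v * ((α / g v) ^ (1 / γ)) ^ γ = α := by
    intro α hα
    have hαpos : 0 < α := lt_of_le_of_lt hti hα
    have hd : 0 < α / g v := div_pos hαpos hCv
    refine ⟨Real.rpow_pos_of_pos hd _, ?_⟩
    rw [← Real.rpow_mul (le_of_lt hd)]
    have : 1 / γ * γ = 1 := by field_simp
    rw [this, Real.rpow_one]
    field_simp
  have hsinj : ∀ s α : ℝ, 0 < s → g v * s ^ γ = α → s = (α / g v) ^ (1 / γ) := by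
    intro s α hs hsα
    have h1 : s ^ γ = α / g v := by
      rw [eq_div_iff (ne_of_gt hCv)]
      linarith [mul_comm (g v) (s ^ γ)]
    rw [← h1, ← Real.rpow_mul (le_of_lt hs)]
    have : γ * (1 / γ) = 1 := by field_simp
    rw [this, Real.rpow_one]
  -- apply the structural lemma
  obtain ⟨αm, hαmI, hsup, huniqmax, hlevels⟩ :=
    concave_level_sets htt hcont hconc' hhpos hl0 hl1
  have hlam₀' : lam₀ = h αm := by rw [hlam₀, hsup]
  constructor
  · -- two solutions for 0 < lam < lam₀
    intro lam hlam hlam'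
    rw [hlam₀'] at hlam'
    obtain ⟨α₁, α₂, hα₁I, hα₂I, h12, hhα₁, hhα₂, huniq⟩ := hlevels lam hlam hlam'
    obtain ⟨hs₁pos, hs₁eq⟩ := hsof α₁ hα₁I.1
    obtain ⟨hs₂pos, hs₂eq⟩ := hsof α₂ hα₂I.1
    refine ⟨(α₁ / g v) ^ (1 / γ), (α₂ / g v) ^ (1 / γ), hs₁pos, ?_, ⟨?_, ?_, ?_⟩, ⟨?_, ?_, ?_⟩, ?_⟩
    · exact Real.rpow_lt_rpow (le_of_lt (div_pos (lt_of_le_of_lt hti hα₁I.1) hCv))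
        ((div_lt_div_iff_of_pos_right hCv).2 h12) (by positivity)
    · rw [key lam _ hs₁pos, hs₁eq]; exact hhα₁
    · rw [hs₁eq]; exact hα₁I.1
    · rw [hs₁eq]; exact hα₁I.2
    · rw [key lam _ hs₂pos, hs₂eq]; exact hhα₂
    · rw [hs₂eq]; exact hα₂I.1
    · rw [hs₂eq]; exact hα₂I.2
    · intro s hs hb1 hb2 hsol
      have hα : h (g v * s ^ γ) = lam := (key lam s hs).1 hsol
      rcases huniq (g v * s ^ γ) ⟨hb1, hb2⟩ hα with h1 | h1
      · exact Or.inl (hsinj s α₁ hs h1)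
      · exact Or.inr (hsinj s α₂ hs h1)
  · -- unique solution for lam = lam₀
    obtain ⟨hsmpos, hsmeq⟩ := hsof αm hαmI.1
    refine ⟨(αm / g v) ^ (1 / γ), ⟨hsmpos, ?_, ?_, ?_⟩, ?_⟩
    · rw [hsmeq]; exact hαmI.1
    · rw [hsmeq]; exact hαmI.2
    · rw [key lam₀ _ hsmpos, hsmeq, hlam₀']
    · rintro y ⟨hy, hyb1, hyb2, hysol⟩
      have hα : h (g v * y ^ γ) = lam₀ := (key lam₀ y hy).1 hysol
      rw [hlam₀'] at hα
      have := huniqmax (g v * y ^ γ) ⟨hyb1, hyb2⟩ hα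
      exact hsinj y αm hy this
end
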